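/- In a pair of RPPs (Λ, Λ') of the same shape with g(Λ,Λ') = 0, when the border-strip paths of the corresponding lozenge tilings are superimposed, for every i the i-th blue path (from Λ) lies weakly below the i-th red path (from Λ') and strictly above the (i+1)-th red path. -/

import Mathlib

/-- An integer partition: a weakly decreasing, eventually-zero sequence of
nonnegative integers (0-indexed: `part i` is the (i+1)-st part). -/
structure IntPartition where
  part : ℕ → ℕ
  antitone : ∀ ⦃i j : ℕ⦄, i ≤ j → part j ≤ part i
  eventually_zero : ∃ N, ∀ i, N ≤ i → part i = 0

/-- The conjugate partition: `conj j` = number of parts strictly larger than `j`,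
i.e. the length of the (j+1)-st column (1-indexed λ'_{j+1}). -/
noncomputable def IntPartition.conj (P : IntPartition) (j : ℕ) : ℕ :=
  Nat.card {i : ℕ // j < P.part i}

/-- The size |λ| of a partition. -/
noncomputable def IntPartition.size (P : IntPartition) : ℕ := ∑ᶠ i, P.part i

/-- μ ⪯ λ : the interlacing relation λ₁ ≥ μ₁ ≥ λ₂ ≥ μ₂ ≥ ... -/
def Interlace (μ lam : IntPartition) : Prop :=
  ∀ i, μ.part i ≤ lam.part i ∧ lam.part (i + 1) ≤ μ.part i

/-- Hook length of the (0-indexed) cell (i,j), valid when `j < P.part i`: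
arm + leg + 1 = (λ_i - j - 1) + (λ'_j - i - 1) + 1. -/
noncomputable def IntPartition.hook (P : IntPartition) (i j : ℕ) : ℕ :=
  (P.part i - j) + (P.conj j - i) - 1

/-- A reverse plane partition of shape `P`: a filling of the Young diagram of `P`
by nonnegative integers, weakly increasing along rows (left to right) and along
columns (bottom to top, i.e. with increasing row index `i`). -/
structure RPP (P : IntPartition) where
  entry : ℕ → ℕ → ℕ
  zero_outside : ∀ i j, P.part i ≤ j → entry i j = 0
  row_mono : ∀ i j k, j ≤ k → k < P.part i → entry i j ≤ entry i k
  col_mono : ∀ i k j, i ≤ k → j < P.part k → entry i j ≤ entry k j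

/-- The volume of a reverse plane partition: the sum of all entries. -/
noncomputable def RPP.volume {P : IntPartition} (Λ : RPP P) : ℕ :=
  ∑ᶠ i, ∑ᶠ j, Λ.entry i j

/-- The hook-length product ∏_{c ∈ λ} (1 - q^{h_λ(c)})⁻¹ as a power series. -/
noncomputable def hookProd (P : IntPartition) : PowerSeries ℚ :=
  ∏ᶠ i, ∏ j ∈ Finset.range (P.part i),
    (1 - (PowerSeries.X : PowerSeries ℚ) ^ (P.hook i j))⁻¹

/-- Generating function ∑_{Λ ∈ RPP(λ)} q^{|Λ|}. -/
noncomputable def rppSeries (P : IntPartition) : PowerSeries ℚ :=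
  PowerSeries.mk fun n => (Nat.card {Λ : RPP P // Λ.volume = n} : ℚ)

/-- Step `k` (k = 0,…,λ₁+λ'₁-1) of the boundary of λ in Russian convention is a
particle (down-step) iff the Maya diagram of λ has a particle there; particle
positions are λ_i - i (1-indexed), shifted by λ'₁ so steps start at 0. -/
def isParticleStep (P : IntPartition) (k : ℕ) : Prop :=
  ∃ i, i < P.conj 0 ∧ k + i + 1 = P.conj 0 + P.part i

/-- Number of particle (gray) steps among steps 0,…,k-1. -/
noncomputable def grayCount (P : IntPartition) (k : ℕ) : ℕ :=
  Nat.card {j : ℕ // j < k ∧ isParticleStep P j}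

/-- Absolute column of the center of the Maya diagram of the k-th diagonal slice:
the center starts at λ'₁ and shifts one column left across each gray (particle) row. -/
noncomputable def mayaCenter (P : IntPartition) (k : ℕ) : ℤ :=
  (P.conj 0 : ℤ) - grayCount P k

/-- Number of cells of the diagram of `P` on the diagonal of content `c`
(0-indexed cells (i,j) with j - i = c). -/
noncomputable def diagCount (P : IntPartition) (c : ℤ) : ℕ :=
  Nat.card {i : ℕ // 0 ≤ (i : ℤ) + c ∧ (i : ℤ) + c < P.part i}

/-- The k-th diagonal slice of a reverse plane partition, read as a partition:
the entries on the diagonal of content k - λ'₁, read from the outer (topmost)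
cell inward (entries of an RPP weakly decrease inward along a diagonal). -/
noncomputable def RPP.slice {P : IntPartition} (Λ : RPP P) (k m : ℕ) : ℕ :=
  let c : ℤ := (k : ℤ) - P.conj 0
  let cnt := diagCount P c
  if m < cnt then
    let i0 : ℕ := (max 0 (-c)).toNat + (cnt - 1 - m)
    Λ.entry i0 ((i0 : ℤ) + c).toNat
  else 0

/-- Absolute column of the m-th particle (0-indexed) of the Maya diagram of the
k-th slice of `Λ`: slice_k(m) - (m+1) relative to the slice's center. -/
noncomputable def RPP.pos {P : IntPartition} (Λ : RPP P) (k m : ℕ) : ℤ :=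
  (Λ.slice k m : ℤ) - (m + 1) + mayaCenter P k

/-- Number of lattice paths (of each color) still present in the row between
slices k and k+1: one path exits to the right at each gray row below. -/
noncomputable def activePaths (P : IntPartition) (k : ℕ) : ℕ :=
  P.conj 0 - grayCount P k

/-- Interaction count in a white row k: the number of vertices where a blue path
exits to the right while a red path is present (coupled pairs of types 1 and 2). -/
noncomputable def tWhite {P : IntPartition} (Λ Λ' : RPP P) (k : ℕ) : ℕ :=
  ∑ m ∈ Finset.range (activePaths P k), ∑ m' ∈ Finset.range (activePaths P k),
    Nat.card {p : ℤ // Λ.pos k m ≤ p ∧ p < Λ.pos (k + 1) m ∧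
                       Λ'.pos k m' ≤ p ∧ p ≤ Λ'.pos (k + 1) m'}

/-- In a gray row k, the red paths occupy these columns: bottom particle m ≥ 1
travels to top particle m-1, and bottom particle 0 exits to the right. -/
def redOccupied {P : IntPartition} (Λ' : RPP P) (k : ℕ) (p : ℤ) : Prop :=
  Λ'.pos k 0 ≤ p ∨
    ∃ m, 1 ≤ m ∧ m < activePaths P k ∧ Λ'.pos k m ≤ p ∧ p ≤ Λ'.pos (k + 1) (m - 1)

/-- In a gray row k, the columns where a blue path exits the vertex to the right. -/
def blueExitsRight {P : IntPartition} (Λ : RPP P) (k : ℕ) (p : ℤ) : Prop :=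
  Λ.pos k 0 ≤ p ∨
    ∃ m, 1 ≤ m ∧ m < activePaths P k ∧ Λ.pos k m ≤ p ∧ p < Λ.pos (k + 1) (m - 1)

/-- Interaction count in a gray row k: the number of vertices (columns p ≥ 0 of the
domain) where no red path is present and no blue path exits to the right
(coupled pairs of types 3 and 4). -/
noncomputable def tGray {P : IntPartition} (Λ Λ' : RPP P) (k : ℕ) : ℕ :=
  Nat.card {p : ℤ // 0 ≤ p ∧ ¬ redOccupied Λ' k p ∧ ¬ blueExitsRight Λ k p}

open Classical in
/-- g(Λ,Λ'): the number of coupled pairs of lozenges when the lozenge tilings of the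
two reverse plane partitions Λ (blue) and Λ' (red) are superimposed, computed row by
row through the associated vertex model / sequence of diagonal slices. -/
noncomputable def coupledPairs {P : IntPartition} (Λ Λ' : RPP P) : ℕ :=
  ∑ k ∈ Finset.range (P.part 0 + P.conj 0),
    if isParticleStep P k then tGray Λ Λ' k else tWhite Λ Λ' k

/-- Removing the outermost border strip from a partition: the remaining cells are
exactly those (i,j) with (i+1,j+1) still in the diagram, so the new row lengths are
λ_{i+1} - 1. -/
def removeStrip (P : IntPartition) : IntPartition where
  part i := P.part (i + 1) - 1
  antitone := fun i j h => Nat.sub_le_sub_right (P.antitone (Nat.succ_le_succ h)) 1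
  eventually_zero := by
    obtain ⟨N, hN⟩ := P.eventually_zero
    exact ⟨N, fun i hi => by simp only [hN (i + 1) (by omega)]⟩

/-- The outermost border strip of a partition: the cells (i,j) of the diagram with
(i+1,j+1) not in the diagram. -/
def firstStrip (P : IntPartition) (i j : ℕ) : Prop :=
  j < P.part i ∧ ¬ (j + 1 < P.part (i + 1))

/-- The s-th border strip of λ (s ≥ 1, from outermost to innermost): the outermost
border strip of the partition obtained by removing the first s-1 border strips. -/
def strip (P : IntPartition) (s : ℕ) (i j : ℕ) : Prop :=
  firstStrip (removeStrip^[s - 1] P) i j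

/- ======================  Auxiliary development  ====================== -/

attribute [local instance] Classical.propDecidable

namespace PathsOrderingAux

open Finset

/-- A finite "downward closed above β" subset of ℕ is an interval. -/
lemma lower_eq_Ico (s : Finset ℕ) (β : ℕ) (hlo : ∀ x ∈ s, β ≤ x)
    (hdc : ∀ a b : ℕ, β ≤ a → a ≤ b → b ∈ s → a ∈ s) :
    s = Finset.Ico β (β + s.card) := by
  have hsub : s ⊆ Finset.Ico β (β + s.card) := by
    intro x hx
    rw [Finset.mem_Ico]
    refine ⟨hlo x hx, ?_⟩
    by_contra hge
    push_neg at hge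
    have hIcc : Finset.Icc β x ⊆ s := by
      intro a ha
      rw [Finset.mem_Icc] at ha
      exact hdc a x ha.1 ha.2 hx
    have := Finset.card_le_card hIcc
    rw [Nat.card_Icc] at this
    omega
  exact Finset.eq_of_subset_of_card_le hsub (by rw [Nat.card_Ico]; omega)

lemma eq_of_lower (s : Finset ℕ) (β : ℕ) (hlo : ∀ x ∈ s, β ≤ x)
    (hdc : ∀ a b : ℕ, β ≤ a → a ≤ b → b ∈ s → a ∈ s) :
    ∀ x, x ∈ s ↔ β ≤ x ∧ x < β + s.card := by
  intro x
  conv_lhs => rw [lower_eq_Ico s β hlo hdc]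
  rw [Finset.mem_Ico]

lemma natCard_subtype {p : ℕ → Prop} (s : Finset ℕ) (h : ∀ x, p x ↔ x ∈ s) :
    Nat.card {x : ℕ // p x} = s.card := by
  rw [← Nat.card_eq_finsetCard]
  exact Nat.card_congr (Equiv.subtypeEquivRight h)

variable (P : IntPartition)

lemma part_pos_iff : ∀ i, 0 < P.part i ↔ i < P.conj 0 := by
  obtain ⟨N, hN⟩ := P.eventually_zero
  set s : Finset ℕ := (Finset.range N).filter (fun i => 0 < P.part i) with hs
  have hmem : ∀ x, 0 < P.part x ↔ x ∈ s := by
    intro x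
    simp only [hs, Finset.mem_filter, Finset.mem_range]
    constructor
    · intro h
      refine ⟨?_, h⟩
      by_contra hh; push_neg at hh
      rw [hN x hh] at h; exact absurd h (lt_irrefl 0)
    · exact fun h => h.2
  have hdc : ∀ a b : ℕ, 0 ≤ a → a ≤ b → b ∈ s → a ∈ s := by
    intro a b _ hab hb
    rw [← hmem b] at hb
    rw [← hmem a]
    exact lt_of_lt_of_le hb (P.antitone hab)
  have hcard : P.conj 0 = s.card := natCard_subtype s hmem
  intro i
  rw [hmem i, eq_of_lower s 0 (fun _ _ => Nat.zero_le _) hdc i, hcard]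
  omega

/-- Rows whose border-strip path has already exited before step `k`. -/
noncomputable def grayF (k : ℕ) : Finset ℕ :=
  (Finset.range (P.conj 0)).filter (fun i => P.conj 0 + P.part i ≤ k + i)

/-- Rows of the cells of the `k`-th diagonal. -/
noncomputable def diagF (k : ℕ) : Finset ℕ :=
  (Finset.range (P.conj 0)).filter
    (fun i => P.conj 0 ≤ i + k ∧ i + k < P.conj 0 + P.part i)

lemma grayCount_eq (k : ℕ) : grayCount P k = (grayF P k).card := by
  have h1 : grayCount P k
      = ((Finset.range k).filter (fun j => isParticleStep P j)).card := by
    apply natCard_subtype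
    intro x
    simp only [Finset.mem_filter, Finset.mem_range]
  rw [h1]
  symm
  apply Finset.card_bij (fun i _ => P.conj 0 + P.part i - (i + 1))
  · intro i hi
    simp only [grayF, Finset.mem_filter, Finset.mem_range] at hi
    simp only [Finset.mem_filter, Finset.mem_range]
    refine ⟨by omega, ⟨i, hi.1, by omega⟩⟩
  · intro a ha b hb hab
    simp only [grayF, Finset.mem_filter, Finset.mem_range] at ha hb
    have hpa : 0 < P.part a := (part_pos_iff P a).mpr ha.1
    have hpb : 0 < P.part b := (part_pos_iff P b).mpr hb.1
    by_contra hne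
    rcases Nat.lt_or_ge a b with h | h
    · have := P.antitone h.le; omega
    · have hba : b < a := by omega
      have := P.antitone hba.le; omega
  · intro j hj
    simp only [Finset.mem_filter, Finset.mem_range] at hj
    obtain ⟨hjk, i, hiC, hieq⟩ := hj
    exact ⟨i, by simp only [grayF, Finset.mem_filter, Finset.mem_range]; omega, by omega⟩

lemma diagCount_eq (k : ℕ) :
    diagCount P ((k : ℤ) - P.conj 0) = (diagF P k).card := by
  apply natCard_subtype
  intro i
  simp only [diagF, Finset.mem_filter, Finset.mem_range]
  have hp := part_pos_iff P i
  omega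

lemma grayF_card_le (k : ℕ) : (grayF P k).card ≤ P.conj 0 :=
  le_trans (Finset.card_le_card (Finset.filter_subset _ _)) (by simp)

lemma grayF_succ (k : ℕ) :
    (grayF P (k + 1)).card
      = (grayF P k).card + (if isParticleStep P k then 1 else 0) := by
  have hU : grayF P (k + 1) = grayF P k ∪ (Finset.range (P.conj 0)).filter
      (fun i => k + i + 1 = P.conj 0 + P.part i) := by
    ext i
    simp only [grayF, Finset.mem_union, Finset.mem_filter, Finset.mem_range]
    omega
  have hdisj : Disjoint (grayF P k) ((Finset.range (P.conj 0)).filter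
      (fun i => k + i + 1 = P.conj 0 + P.part i)) := by
    rw [Finset.disjoint_left]
    intro i hi hj
    simp only [grayF, Finset.mem_filter, Finset.mem_range] at hi hj
    omega
  rw [hU, Finset.card_union_of_disjoint hdisj]
  congr 1
  by_cases hp : isParticleStep P k
  · rw [if_pos hp]
    obtain ⟨i0, hi0C, hi0⟩ := hp
    rw [Finset.card_eq_one]
    refine ⟨i0, ?_⟩
    ext i
    simp only [Finset.mem_filter, Finset.mem_range, Finset.mem_singleton]
    constructor
    · rintro ⟨hiC, hie⟩
      by_contra hne
      rcases Nat.lt_or_ge i i0 with h | h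
      · have := P.antitone h.le; omega
      · have hlt : i0 < i := by omega
        have := P.antitone hlt.le; omega
    · rintro rfl; exact ⟨hi0C, by omega⟩
  · rw [if_neg hp]
    rw [Finset.card_eq_zero, Finset.filter_eq_empty_iff]
    intro i hi
    simp only [Finset.mem_range] at hi
    exact fun he => hp ⟨i, hi, by omega⟩

lemma cnt_add_gray (k : ℕ) :
    (diagF P k).card + (grayF P k).card = min k (P.conj 0) := by
  have h1 : diagF P k ∪ grayF P k
      = (Finset.range (P.conj 0)).filter (fun i => P.conj 0 ≤ i + k) := by
    ext i
    simp only [diagF, grayF, Finset.mem_union, Finset.mem_filter, Finset.mem_range]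
    omega
  have hdisj : Disjoint (diagF P k) (grayF P k) := by
    rw [Finset.disjoint_left]
    intro i hi hj
    simp only [diagF, grayF, Finset.mem_filter, Finset.mem_range] at hi hj
    omega
  have h2 : (Finset.range (P.conj 0)).filter (fun i => P.conj 0 ≤ i + k)
      = Finset.Ico (P.conj 0 - k) (P.conj 0) := by
    ext i
    simp only [Finset.mem_filter, Finset.mem_range, Finset.mem_Ico]
    omega
  have h3 := Finset.card_union_of_disjoint hdisj
  rw [h1, h2, Nat.card_Ico] at h3
  omega

lemma mem_diagF_iff (k : ℕ) : ∀ i, i ∈ diagF P k ↔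
    P.conj 0 - k ≤ i ∧ i < (P.conj 0 - k) + (diagF P k).card := by
  apply eq_of_lower
  · intro x hx
    simp only [diagF, Finset.mem_filter, Finset.mem_range] at hx
    omega
  · intro a b hba hab hb
    simp only [diagF, Finset.mem_filter, Finset.mem_range] at hb ⊢
    have h1 := P.antitone hab
    omega

lemma diagF_top (k : ℕ) :
    (P.conj 0 - k) + (diagF P k).card = P.conj 0 - (grayF P k).card := by
  have h1 := cnt_add_gray P k
  have h2 := grayF_card_le P k
  omega

lemma cnt_zero : (diagF P 0).card = 0 := by
  have h1 := cnt_add_gray P 0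
  have h2 : (grayF P 0).card = 0 := by
    rw [Finset.card_eq_zero, Finset.eq_empty_iff_forall_notMem]
    intro i hi
    simp only [grayF, Finset.mem_filter, Finset.mem_range] at hi
    have := (part_pos_iff P i).mpr hi.1
    omega
  omega

lemma cnt_top : (diagF P (P.part 0 + P.conj 0)).card = 0 := by
  rw [Finset.card_eq_zero, Finset.eq_empty_iff_forall_notMem]
  intro i hi
  simp only [diagF, Finset.mem_filter, Finset.mem_range] at hi
  have := P.antitone (Nat.zero_le i)
  omega

/- ----------------------- slices and positions ----------------------- -/

lemma mem_diag_of (k m i : ℕ) (hm : m < (diagF P k).card)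
    (hi : i + m + 1 = P.conj 0 - (grayF P k).card) : i ∈ diagF P k := by
  rw [mem_diagF_iff]
  have h1 := diagF_top P k
  have h2 := grayF_card_le P k
  omega

lemma slice_eq_entry (Λ : RPP P) (k m i : ℕ) (hm : m < (diagF P k).card)
    (hi : i + m + 1 = P.conj 0 - (grayF P k).card) :
    Λ.slice k m = Λ.entry i (i + k - P.conj 0) := by
  have hmem := mem_diag_of P k m i hm hi
  simp only [diagF, Finset.mem_filter, Finset.mem_range] at hmem
  have htop := diagF_top P k
  have hcnt := diagCount_eq P k
  have hmax : (max 0 (-((k : ℤ) - P.conj 0))).toNat = P.conj 0 - k := by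
    rcases le_total ((k : ℤ)) ((P.conj 0 : ℤ)) with h | h
    · rw [max_eq_right (by omega)]; omega
    · rw [max_eq_left (by omega)]; omega
  have hi0 : (max 0 (-((k : ℤ) - P.conj 0))).toNat + ((diagF P k).card - 1 - m) = i := by
    omega
  unfold RPP.slice
  simp only [hcnt, hi0, if_pos hm]
  congr 1
  omega

lemma slice_zero (Λ : RPP P) (k m : ℕ) (hm : ¬ m < (diagF P k).card) :
    Λ.slice k m = 0 := by
  have hcnt := diagCount_eq P k
  unfold RPP.slice
  simp only [hcnt, if_neg hm]

lemma slice_antitone (Λ : RPP P) (k m : ℕ) : Λ.slice k (m + 1) ≤ Λ.slice k m := by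
  by_cases h1 : m + 1 < (diagF P k).card
  · have htop := diagF_top P k
    set n := P.conj 0 - (grayF P k).card with hn
    have h2 : m < (diagF P k).card := by omega
    have hcle : (diagF P k).card ≤ n := by omega
    set i := n - m - 1 with hidef
    have hipos : 1 ≤ i := by omega
    rw [slice_eq_entry P Λ k (m+1) (i - 1) h1 (by omega),
        slice_eq_entry P Λ k m i h2 (by omega)]
    have hmem := mem_diag_of P k m i h2 (by omega)
    simp only [diagF, Finset.mem_filter, Finset.mem_range] at hmem
    have hmono := P.antitone (show i - 1 ≤ i by omega)
    have hle1 : Λ.entry (i-1) ((i-1) + k - P.conj 0) ≤ Λ.entry (i-1) (i + k - P.conj 0) :=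
      Λ.row_mono (i-1) _ _ (by omega) (by omega)
    have hle2 : Λ.entry (i-1) (i + k - P.conj 0) ≤ Λ.entry i (i + k - P.conj 0) :=
      Λ.col_mono (i-1) i _ (by omega) (by omega)
    exact le_trans hle1 hle2
  · rw [slice_zero P Λ k (m+1) h1]
    exact Nat.zero_le _

lemma slice_le_of_le (Λ : RPP P) (k : ℕ) {m m' : ℕ} (h : m ≤ m') :
    Λ.slice k m' ≤ Λ.slice k m := by
  induction m' with
  | zero => have : m = 0 := by omega
            subst this; exact le_refl _
  | succ q ih =>
    rcases Nat.lt_or_ge m (q+1) with h1 | h1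
    · exact le_trans (slice_antitone P Λ k q) (ih (by omega))
    · have : m = q + 1 := by omega
      subst this; exact le_refl _

lemma cnt_succ (k : ℕ) :
    (diagF P (k+1)).card + (if isParticleStep P k then 1 else 0)
      = (diagF P k).card + (if k < P.conj 0 then 1 else 0) := by
  have h1 := cnt_add_gray P k
  have h2 := cnt_add_gray P (k+1)
  have h3 := grayF_succ P k
  have h4 := grayF_card_le P (k+1)
  split_ifs at * <;> omega

lemma slice_le_white (Λ : RPP P) (k : ℕ) (hw : ¬ isParticleStep P k) (m : ℕ) :
    Λ.slice k m ≤ Λ.slice (k+1) m := by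
  by_cases hm : m < (diagF P k).card
  · have hstep := cnt_succ P k
    rw [if_neg hw] at hstep
    have hg := grayF_succ P k
    rw [if_neg hw] at hg
    have htop := diagF_top P k
    have htop' := diagF_top P (k+1)
    set n := P.conj 0 - (grayF P k).card with hn
    have hm' : m < (diagF P (k+1)).card := by omega
    have hcle : (diagF P k).card ≤ n := by omega
    set i := n - m - 1 with hidef
    rw [slice_eq_entry P Λ k m i hm (by omega),
        slice_eq_entry P Λ (k+1) m i hm' (by omega)]
    have hmem := mem_diag_of P k m i hm (by omega)
    have hmem' := mem_diag_of P (k+1) m i hm' (by omega)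
    simp only [diagF, Finset.mem_filter, Finset.mem_range] at hmem hmem'
    exact Λ.row_mono i _ _ (by omega) (by omega)
  · rw [slice_zero P Λ k m hm]; exact Nat.zero_le _

lemma slice_ge_white (Λ : RPP P) (k : ℕ) (hw : ¬ isParticleStep P k) (m : ℕ) :
    Λ.slice (k+1) (m+1) ≤ Λ.slice k m := by
  by_cases hm1 : m + 1 < (diagF P (k+1)).card
  · have hstep := cnt_succ P k
    rw [if_neg hw] at hstep
    have hg := grayF_succ P k
    rw [if_neg hw] at hg
    have htop := diagF_top P k
    have htop' := diagF_top P (k+1)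
    set n := P.conj 0 - (grayF P k).card with hn
    have hm : m < (diagF P k).card := by split_ifs at hstep <;> omega
    have hcle' : (diagF P (k+1)).card ≤ n := by omega
    set i := n - m - 1 with hidef
    have h1 : 1 ≤ i := by omega
    rw [slice_eq_entry P Λ (k+1) (m+1) (i-1) hm1 (by omega),
        slice_eq_entry P Λ k m i hm (by omega)]
    have hmem := mem_diag_of P k m i hm (by omega)
    simp only [diagF, Finset.mem_filter, Finset.mem_range] at hmem
    have hcol : (i-1) + (k+1) - P.conj 0 = i + k - P.conj 0 := by omega
    rw [hcol]
    exact Λ.col_mono (i-1) i _ (by omega) (by omega)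
  · rw [slice_zero P Λ (k+1) (m+1) hm1]; exact Nat.zero_le _

lemma slice_le_gray (Λ : RPP P) (k : ℕ) (hw : isParticleStep P k) (m : ℕ) :
    Λ.slice (k+1) m ≤ Λ.slice k m := by
  by_cases hm' : m < (diagF P (k+1)).card
  · have hstep := cnt_succ P k
    rw [if_pos hw] at hstep
    have hg := grayF_succ P k
    rw [if_pos hw] at hg
    have hgle := grayF_card_le P (k+1)
    have htop := diagF_top P k
    have htop' := diagF_top P (k+1)
    set n := P.conj 0 - (grayF P k).card with hn
    have hn' : P.conj 0 - (grayF P (k+1)).card + 1 = n := by omega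
    have hm : m < (diagF P k).card := by split_ifs at hstep <;> omega
    have hcle' : (diagF P (k+1)).card ≤ n - 1 := by omega
    set i := n - m - 1 with hidef
    have h1 : 1 ≤ i := by omega
    rw [slice_eq_entry P Λ (k+1) m (i-1) hm' (by omega),
        slice_eq_entry P Λ k m i hm (by omega)]
    have hmem := mem_diag_of P k m i hm (by omega)
    simp only [diagF, Finset.mem_filter, Finset.mem_range] at hmem
    have hcol : (i-1) + (k+1) - P.conj 0 = i + k - P.conj 0 := by omega
    rw [hcol]
    exact Λ.col_mono (i-1) i _ (by omega) (by omega)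
  · rw [slice_zero P Λ (k+1) m hm']; exact Nat.zero_le _

lemma slice_ge_gray (Λ : RPP P) (k : ℕ) (hw : isParticleStep P k) (m : ℕ) :
    Λ.slice k (m+1) ≤ Λ.slice (k+1) m := by
  by_cases hm1 : m + 1 < (diagF P k).card
  · have hstep := cnt_succ P k
    rw [if_pos hw] at hstep
    have hg := grayF_succ P k
    rw [if_pos hw] at hg
    have hgle := grayF_card_le P (k+1)
    have htop := diagF_top P k
    have htop' := diagF_top P (k+1)
    set n := P.conj 0 - (grayF P k).card with hn
    have hn' : P.conj 0 - (grayF P (k+1)).card + 1 = n := by omega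
    have hm' : m < (diagF P (k+1)).card := by split_ifs at hstep <;> omega
    have hcle : (diagF P k).card ≤ n := by omega
    set i := n - m - 2 with hidef
    rw [slice_eq_entry P Λ k (m+1) i hm1 (by omega),
        slice_eq_entry P Λ (k+1) m i hm' (by omega)]
    have hmem' := mem_diag_of P (k+1) m i hm' (by omega)
    simp only [diagF, Finset.mem_filter, Finset.mem_range] at hmem'
    exact Λ.row_mono i _ _ (by omega) (by omega)
  · rw [slice_zero P Λ k (m+1) hm1]; exact Nat.zero_le _

lemma pos_eq (Λ : RPP P) (k m : ℕ) :
    Λ.pos k m = (Λ.slice k m : ℤ) - (m + 1) + ((P.conj 0 : ℤ) - (grayF P k).card) := by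
  unfold RPP.pos mayaCenter
  rw [grayCount_eq]

lemma active_eq (k : ℕ) : activePaths P k = P.conj 0 - (grayF P k).card := by
  unfold activePaths
  rw [grayCount_eq]

lemma pos_strict_anti (Λ : RPP P) (k : ℕ) {m m' : ℕ} (h : m < m') :
    Λ.pos k m' < Λ.pos k m := by
  have h1 := slice_le_of_le P Λ k h.le
  rw [pos_eq, pos_eq]
  have : (Λ.slice k m' : ℤ) ≤ (Λ.slice k m : ℤ) := by exact_mod_cast h1
  omega

lemma pos_anti (Λ : RPP P) (k : ℕ) {m m' : ℕ} (h : m ≤ m') :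
    Λ.pos k m' ≤ Λ.pos k m := by
  rcases Nat.lt_or_ge m m' with h1 | h1
  · exact (pos_strict_anti P Λ k h1).le
  · have : m = m' := by omega
    subst this; exact le_refl _

lemma pos_nonneg (Λ : RPP P) (k m : ℕ) (hm : m < activePaths P k) :
    0 ≤ Λ.pos k m := by
  rw [pos_eq]
  rw [active_eq] at hm
  have h1 := grayF_card_le P k
  have h2 : (0:ℤ) ≤ (Λ.slice k m : ℤ) := Int.ofNat_nonneg _
  omega

lemma pos_le_white (Λ : RPP P) (k : ℕ) (hw : ¬ isParticleStep P k) (m : ℕ) :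
    Λ.pos k m ≤ Λ.pos (k+1) m := by
  rw [pos_eq, pos_eq]
  have h1 := slice_le_white P Λ k hw m
  have h2 := grayF_succ P k
  rw [if_neg hw] at h2
  have : (Λ.slice k m : ℤ) ≤ (Λ.slice (k+1) m : ℤ) := by exact_mod_cast h1
  omega

lemma pos_lt_white (Λ : RPP P) (k : ℕ) (hw : ¬ isParticleStep P k) (m : ℕ) :
    Λ.pos (k+1) (m+1) < Λ.pos k m := by
  rw [pos_eq, pos_eq]
  have h1 := slice_ge_white P Λ k hw m
  have h2 := grayF_succ P k
  rw [if_neg hw] at h2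
  have : (Λ.slice (k+1) (m+1) : ℤ) ≤ (Λ.slice k m : ℤ) := by exact_mod_cast h1
  omega

lemma pos_lt_gray (Λ : RPP P) (k : ℕ) (hw : isParticleStep P k) (m : ℕ) :
    Λ.pos (k+1) m < Λ.pos k m := by
  rw [pos_eq, pos_eq]
  have h1 := slice_le_gray P Λ k hw m
  have h2 := grayF_succ P k
  rw [if_pos hw] at h2
  have h3 := grayF_card_le P (k+1)
  have : (Λ.slice (k+1) m : ℤ) ≤ (Λ.slice k m : ℤ) := by exact_mod_cast h1
  omega

lemma pos_le_gray (Λ : RPP P) (k : ℕ) (hw : isParticleStep P k) (m : ℕ) :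
    Λ.pos k (m+1) ≤ Λ.pos (k+1) m := by
  rw [pos_eq, pos_eq]
  have h1 := slice_ge_gray P Λ k hw m
  have h2 := grayF_succ P k
  rw [if_pos hw] at h2
  have h3 := grayF_card_le P (k+1)
  have : (Λ.slice k (m+1) : ℤ) ≤ (Λ.slice (k+1) m : ℤ) := by exact_mod_cast h1
  omega

/- ----------------------- coupling extraction ----------------------- -/

lemma tWhite_no_pair {Λ Λ' : RPP P} {k : ℕ} (ht : tWhite Λ Λ' k = 0)
    {m m' : ℕ} (hm : m < activePaths P k) (hm' : m' < activePaths P k) (p : ℤ)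
    (h1 : Λ.pos k m ≤ p) (h2 : p < Λ.pos (k+1) m) (h3 : Λ'.pos k m' ≤ p)
    (h4 : p ≤ Λ'.pos (k+1) m') : False := by
  unfold tWhite at ht
  rw [Finset.sum_eq_zero_iff] at ht
  have h5 := ht m (Finset.mem_range.mpr hm)
  rw [Finset.sum_eq_zero_iff] at h5
  have h6 := h5 m' (Finset.mem_range.mpr hm')
  have hfin : {q : ℤ | Λ.pos k m ≤ q ∧ q < Λ.pos (k+1) m ∧ Λ'.pos k m' ≤ q ∧
      q ≤ Λ'.pos (k+1) m'}.Finite :=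
    (Set.finite_Icc (Λ.pos k m) (Λ'.pos (k+1) m')).subset
      (fun q hq => Set.mem_Icc.mpr ⟨hq.1, hq.2.2.2⟩)
  haveI : Finite {q : ℤ // Λ.pos k m ≤ q ∧ q < Λ.pos (k+1) m ∧ Λ'.pos k m' ≤ q ∧
      q ≤ Λ'.pos (k+1) m'} := hfin.to_subtype
  haveI : Nonempty {q : ℤ // Λ.pos k m ≤ q ∧ q < Λ.pos (k+1) m ∧ Λ'.pos k m' ≤ q ∧
      q ≤ Λ'.pos (k+1) m'} := ⟨⟨p, h1, h2, h3, h4⟩⟩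
  have h7 : 0 < Nat.card {q : ℤ // Λ.pos k m ≤ q ∧ q < Λ.pos (k+1) m ∧ Λ'.pos k m' ≤ q ∧
      q ≤ Λ'.pos (k+1) m'} := Nat.card_pos
  omega

lemma tGray_covered {Λ Λ' : RPP P} {k : ℕ} (ht : tGray Λ Λ' k = 0) (p : ℤ) (hp : 0 ≤ p) :
    redOccupied Λ' k p ∨ blueExitsRight Λ k p := by
  by_contra hcon
  push_neg at hcon
  unfold tGray at ht
  have hfin : {q : ℤ | 0 ≤ q ∧ ¬ redOccupied Λ' k q ∧ ¬ blueExitsRight Λ k q}.Finite :=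
    (Set.finite_Ico (0:ℤ) (Λ'.pos k 0)).subset (fun q hq => Set.mem_Ico.mpr
      ⟨hq.1, by by_contra hge; push_neg at hge; exact hq.2.1 (Or.inl hge)⟩)
  haveI : Finite {q : ℤ // 0 ≤ q ∧ ¬ redOccupied Λ' k q ∧ ¬ blueExitsRight Λ k q} :=
    hfin.to_subtype
  haveI : Nonempty {q : ℤ // 0 ≤ q ∧ ¬ redOccupied Λ' k q ∧ ¬ blueExitsRight Λ k q} :=
    ⟨⟨p, hp, hcon.1, hcon.2⟩⟩
  have h7 : 0 < Nat.card {q : ℤ // 0 ≤ q ∧ ¬ redOccupied Λ' k q ∧ ¬ blueExitsRight Λ k q} :=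
    Nat.card_pos
  omega

lemma row_zero {Λ Λ' : RPP P} (hg : coupledPairs Λ Λ' = 0) {k : ℕ}
    (hk : k < P.part 0 + P.conj 0) :
    (isParticleStep P k → tGray Λ Λ' k = 0) ∧
    (¬ isParticleStep P k → tWhite Λ Λ' k = 0) := by
  unfold coupledPairs at hg
  rw [Finset.sum_eq_zero_iff] at hg
  have h1 := hg k (Finset.mem_range.mpr hk)
  constructor
  · intro h; rwa [if_pos h] at h1
  · intro h; rwa [if_neg h] at h1

/- ----------------------- the four step lemmas ----------------------- -/

lemma active_succ_white {k : ℕ} (hw : ¬ isParticleStep P k) :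
    activePaths P (k+1) = activePaths P k := by
  rw [active_eq, active_eq]
  have h1 := grayF_succ P k
  rw [if_neg hw] at h1
  omega

lemma active_succ_gray {k : ℕ} (hw : isParticleStep P k) :
    activePaths P (k+1) + 1 = activePaths P k := by
  rw [active_eq, active_eq]
  have h1 := grayF_succ P k
  rw [if_pos hw] at h1
  have h2 := grayF_card_le P (k+1)
  omega

lemma stepA_white {Λ Λ' : RPP P} {k : ℕ} (hw : ¬ isParticleStep P k)
    (ht : tWhite Λ Λ' k = 0)
    (ih : ∀ m, m < activePaths P k → Λ.pos k m ≤ Λ'.pos k m) :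
    ∀ m, m < activePaths P (k+1) → Λ.pos (k+1) m ≤ Λ'.pos (k+1) m := by
  intro m hm
  rw [active_succ_white P hw] at hm
  by_contra hcon
  push_neg at hcon
  exact tWhite_no_pair P ht hm hm (Λ'.pos k m)
    (le_trans (ih m hm) (le_refl _))
    (lt_of_le_of_lt (pos_le_white P Λ' k hw m) hcon)
    (le_refl _) (pos_le_white P Λ' k hw m)

lemma stepB_white {Λ Λ' : RPP P} {k : ℕ} (hw : ¬ isParticleStep P k)
    (ht : tWhite Λ Λ' k = 0)
    (ih : ∀ m, m + 1 < activePaths P (k+1) → Λ'.pos (k+1) (m+1) < Λ.pos (k+1) m) :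
    ∀ m, m + 1 < activePaths P k → Λ'.pos k (m+1) < Λ.pos k m := by
  intro m hm
  by_contra hcon
  push_neg at hcon
  have hm1 : m + 1 < activePaths P (k+1) := by rw [active_succ_white P hw]; exact hm
  exact tWhite_no_pair P ht (show m < activePaths P k by omega) hm (Λ'.pos k (m+1))
    hcon
    (lt_of_le_of_lt (pos_le_white P Λ' k hw (m+1)) (ih m hm1))
    (le_refl _) (pos_le_white P Λ' k hw (m+1))

lemma stepA_gray {Λ Λ' : RPP P} {k : ℕ} (hw : isParticleStep P k)
    (ht : tGray Λ Λ' k = 0)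
    (ih : ∀ m, m < activePaths P k → Λ.pos k m ≤ Λ'.pos k m) :
    ∀ m, m < activePaths P (k+1) → Λ.pos (k+1) m ≤ Λ'.pos (k+1) m := by
  intro m hm
  by_contra hcon
  push_neg at hcon
  have hma := active_succ_gray P hw
  have hmk : m < activePaths P k := by omega
  set p := Λ.pos (k+1) m with hp
  have hp0 : 0 ≤ p := pos_nonneg P Λ (k+1) m hm
  rcases tGray_covered P ht p hp0 with hred | hblue
  · rcases hred with h0 | ⟨m', hm'1, hm'2, hm'3, hm'4⟩
    · -- r_0 ≤ p, but p < b_m ≤ r_m ≤ r_0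
      have h1 : p < Λ.pos k m := pos_lt_gray P Λ k hw m
      have h2 := ih m hmk
      have h3 := pos_anti P Λ' k (Nat.zero_le m)
      omega
    · rcases Nat.lt_or_ge m' (m+1) with hc | hc
      · -- m' ≤ m : r_{m'} ≥ r_m > p
        have h1 : Λ'.pos k m ≤ Λ'.pos k m' := pos_anti P Λ' k (by omega)
        have h2 : p < Λ.pos k m := pos_lt_gray P Λ k hw m
        have h3 := ih m hmk
        omega
      · -- m' - 1 ≥ m : r⁺_{m'-1} ≤ r⁺_m < p
        have h1 : Λ'.pos (k+1) (m'-1) ≤ Λ'.pos (k+1) m := pos_anti P Λ' (k+1) (by omega)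
        omega
  · rcases hblue with h0 | ⟨m', hm'1, hm'2, hm'3, hm'4⟩
    · -- b_0 ≤ p, but p < b_m ≤ b_0
      have h1 : p < Λ.pos k m := pos_lt_gray P Λ k hw m
      have h2 := pos_anti P Λ k (Nat.zero_le m)
      omega
    · rcases Nat.lt_or_ge m' (m+1) with hc | hc
      · -- m' ≤ m : b_{m'} ≥ b_m > p
        have h1 : Λ.pos k m ≤ Λ.pos k m' := pos_anti P Λ k (by omega)
        have h2 : p < Λ.pos k m := pos_lt_gray P Λ k hw m
        omega
      · -- m' - 1 ≥ m : b⁺_{m'-1} ≤ b⁺_m = p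
        have h1 : Λ.pos (k+1) (m'-1) ≤ Λ.pos (k+1) m := pos_anti P Λ (k+1) (by omega)
        omega

lemma stepB_gray {Λ Λ' : RPP P} {k : ℕ} (hw : isParticleStep P k)
    (ht : tGray Λ Λ' k = 0)
    (ih : ∀ m, m + 1 < activePaths P (k+1) → Λ'.pos (k+1) (m+1) < Λ.pos (k+1) m) :
    ∀ m, m + 1 < activePaths P k → Λ'.pos k (m+1) < Λ.pos k m := by
  intro m hm
  by_contra hcon
  push_neg at hcon
  have hma := active_succ_gray P hw
  set p := Λ.pos (k+1) m with hp
  have hp0 : 0 ≤ p := pos_nonneg P Λ (k+1) m (by omega)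
  have hpb : p < Λ.pos k m := pos_lt_gray P Λ k hw m
  rcases tGray_covered P ht p hp0 with hred | hblue
  · rcases hred with h0 | ⟨m', hm'1, hm'2, hm'3, hm'4⟩
    · -- r_0 ≤ p, but p < b_m ≤ r_{m+1} ≤ r_0
      have h3 := pos_anti P Λ' k (Nat.zero_le (m+1))
      omega
    · -- r_{m'} ≤ p < b_m ≤ r_{m+1}  ⇒  m' ≥ m+2
      have hgt : m + 1 < m' := by
        by_contra hle
        push_neg at hle
        have := pos_anti P Λ' k hle
        omega
      have h1 : Λ'.pos (k+1) (m'-1) ≤ Λ'.pos (k+1) (m+1) := pos_anti P Λ' (k+1) (by omega)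
      have h2 : Λ'.pos (k+1) (m+1) < Λ.pos (k+1) m := ih m (by omega)
      omega
  · rcases hblue with h0 | ⟨m', hm'1, hm'2, hm'3, hm'4⟩
    · have h2 := pos_anti P Λ k (Nat.zero_le m)
      omega
    · rcases Nat.lt_or_ge m' (m+1) with hc | hc
      · have h1 : Λ.pos k m ≤ Λ.pos k m' := pos_anti P Λ k (by omega)
        omega
      · have h1 : Λ.pos (k+1) (m'-1) ≤ Λ.pos (k+1) m := pos_anti P Λ (k+1) (by omega)
        omega

/- ----------------------- the two inductions ----------------------- -/

lemma invA {Λ Λ' : RPP P} (hg : coupledPairs Λ Λ' = 0) :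
    ∀ k, k ≤ P.part 0 + P.conj 0 →
      ∀ m, m < activePaths P k → Λ.pos k m ≤ Λ'.pos k m := by
  intro k
  induction k with
  | zero =>
    intro _ m _
    have h0 := cnt_zero P
    rw [pos_eq, pos_eq, slice_zero P Λ 0 m (by omega), slice_zero P Λ' 0 m (by omega)]
  | succ k ih =>
    intro hk m hm
    have hk' : k < P.part 0 + P.conj 0 := by omega
    have hrow := row_zero P hg hk'
    by_cases hw : isParticleStep P k
    · exact stepA_gray P hw (hrow.1 hw) (ih (by omega)) m hm
    · exact stepA_white P hw (hrow.2 hw) (ih (by omega)) m hm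

lemma invB {Λ Λ' : RPP P} (hg : coupledPairs Λ Λ' = 0) :
    ∀ d k, k + d = P.part 0 + P.conj 0 →
      ∀ m, m + 1 < activePaths P k → Λ'.pos k (m+1) < Λ.pos k m := by
  intro d
  induction d with
  | zero =>
    intro k hk m _
    have h0 : (diagF P k).card = 0 := by
      have := cnt_top P
      rw [show k = P.part 0 + P.conj 0 by omega]
      exact this
    rw [pos_eq, pos_eq, slice_zero P Λ k m (by omega), slice_zero P Λ' k (m+1) (by omega)]
    omega
  | succ d ih =>
    intro k hk m hm
    have hk' : k < P.part 0 + P.conj 0 := by omega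
    have hrow := row_zero P hg hk'
    have ih' := ih (k+1) (by omega)
    by_cases hw : isParticleStep P k
    · exact stepB_gray P hw (hrow.1 hw) ih' m hm
    · exact stepB_white P hw (hrow.2 hw) ih' m hm

/- ----------------------- strips and diagonals ----------------------- -/

lemma iterate_part (t : ℕ) : ∀ i, ((removeStrip^[t]) P).part i = P.part (i + t) - t := by
  induction t with
  | zero => intro i; simp
  | succ t ih =>
    intro i
    rw [Function.iterate_succ_apply']
    show ((removeStrip^[t]) P).part (i+1) - 1 = _
    rw [ih (i+1)]
    have he : i + 1 + t = i + (t + 1) := by omega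
    rw [he]
    omega

lemma strip_iff (s i j : ℕ) (hs : 1 ≤ s) :
    strip P s i j ↔ (j + (s-1) < P.part (i + (s-1)) ∧ P.part (i + s) ≤ j + s) := by
  unfold strip firstStrip
  rw [iterate_part, iterate_part]
  have he : i + 1 + (s-1) = i + s := by omega
  rw [he]
  omega

end PathsOrderingAux


/-- When g(Λ,Λ') = 0 (no coupled lozenge pairs in the superimposed tilings of the
blue RPP Λ and the red RPP Λ'), for every s ≥ 1 the s-th blue border-strip path
lies weakly below the s-th red one, and strictly above the (s+1)-th red one.  In
terms of the fillings: on the s-th border strip the blue entries are at most the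
red ones, and on the (s+1)-th border strip the red entries are at most the blue
entries at the diagonally shifted cell of the s-th strip. -/
theorem paths_ordering_of_g_zero (P : IntPartition) (Λ Λ' : RPP P)
    (hg : coupledPairs Λ Λ' = 0) (s : ℕ) (hs : 1 ≤ s) (i j : ℕ) :
    (strip P s i j → Λ.entry i j ≤ Λ'.entry i j) ∧
    (strip P (s + 1) i j → Λ'.entry i j ≤ Λ.entry (i + 1) (j + 1)) := by
  open PathsOrderingAux in
  constructor
  · intro hst
    rw [strip_iff P s i j hs] at hst
    obtain ⟨hA1, hA2⟩ := hst
    set t := s - 1 with htdef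
    rw [show i + s = i + t + 1 by omega] at hA2
    have hA2' : P.part (i + t + 1) ≤ j + t + 1 := by omega
    have hmono1 := P.antitone (show i ≤ i + t by omega)
    have hiC : i < P.conj 0 := by
      rw [← part_pos_iff]
      omega
    have hitC : i + t < P.conj 0 := by
      rw [← part_pos_iff]
      omega
    set C := P.conj 0 with hC
    set k := C - i + j with hkdef
    have hmem1 : i + t ∈ diagF P k := by
      simp only [diagF, Finset.mem_filter, Finset.mem_range]
      refine ⟨hitC, by omega, by omega⟩
    have hnmem : i + t + 1 ∉ diagF P k := by
      simp only [diagF, Finset.mem_filter, Finset.mem_range]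
      push_neg
      intro _ _
      omega
    have h1 := (mem_diagF_iff P k (i+t)).mp hmem1
    have h3 : ¬(C - k ≤ i+t+1 ∧ i+t+1 < (C-k) + (diagF P k).card) :=
      fun hc => hnmem ((mem_diagF_iff P k _).mpr hc)
    have htopk : (C - k) + (diagF P k).card = i + t + 1 := by omega
    have hmt : t < (diagF P k).card := by omega
    have htopg := diagF_top P k
    have hslice : ∀ (Λ₀ : RPP P), Λ₀.slice k t = Λ₀.entry i j := by
      intro Λ₀
      rw [slice_eq_entry P Λ₀ k t i hmt (by omega)]
      congr 1
      omega
    have hkK : k ≤ P.part 0 + C := by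
      have := P.antitone (Nat.zero_le (i+t))
      omega
    have hact : t < activePaths P k := by
      rw [active_eq]
      omega
    have hA := invA P hg k hkK t hact
    rw [pos_eq, pos_eq, hslice Λ, hslice Λ'] at hA
    omega
  · intro hst
    rw [strip_iff P (s+1) i j (by omega)] at hst
    simp only [Nat.add_sub_cancel] at hst
    obtain ⟨hA1, hA2⟩ := hst
    rw [show i + (s + 1) = i + s + 1 by omega] at hA2
    have hmono1 := P.antitone (show i ≤ i + s by omega)
    have hmono2 := P.antitone (show i + 1 ≤ i + s by omega)
    have hiC : i < P.conj 0 := by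
      rw [← part_pos_iff]
      omega
    have hisC : i + s < P.conj 0 := by
      rw [← part_pos_iff]
      omega
    set C := P.conj 0 with hC
    set k := C - i + j with hkdef
    have hmem1 : i + s ∈ diagF P k := by
      simp only [diagF, Finset.mem_filter, Finset.mem_range]
      refine ⟨hisC, by omega, by omega⟩
    have hnmem : i + s + 1 ∉ diagF P k := by
      simp only [diagF, Finset.mem_filter, Finset.mem_range]
      push_neg
      intro _ _
      omega
    have h1 := (mem_diagF_iff P k (i+s)).mp hmem1
    have h3 : ¬(C - k ≤ i+s+1 ∧ i+s+1 < (C-k) + (diagF P k).card) :=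
      fun hc => hnmem ((mem_diagF_iff P k _).mpr hc)
    have htopk : (C - k) + (diagF P k).card = i + s + 1 := by omega
    have hms : s < (diagF P k).card := by omega
    have hms1 : s - 1 < (diagF P k).card := by omega
    have htopg := diagF_top P k
    have hsliceR : Λ'.slice k s = Λ'.entry i j := by
      rw [slice_eq_entry P Λ' k s i hms (by omega)]
      congr 1
      omega
    have hsliceB : Λ.slice k (s-1) = Λ.entry (i+1) (j+1) := by
      rw [slice_eq_entry P Λ k (s-1) (i+1) hms1 (by omega)]
      congr 1
      omega
    have hkK : k ≤ P.part 0 + C := by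
      have := P.antitone (Nat.zero_le (i+s))
      omega
    have hact : s - 1 + 1 < activePaths P k := by
      rw [active_eq]
      omega
    have hB := invB P hg (P.part 0 + C - k) k (by omega) (s-1) hact
    have hseq : s - 1 + 1 = s := by omega
    rw [hseq] at hB
    rw [pos_eq, pos_eq, hsliceR, hsliceB] at hB
    omega
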